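/- Under the stated MHE setting, if for every ξ = (x₀,…,x_N) ∈ ℝ^{(N+1)n} and every i = 0,…,N−1 the 2n×2n matrix H̿_i(ξ) is diagonally dominant (for each row, the absolute value of the diagonal entry is at least the sum of the absolute values of the off-diagonal entries in that row) and the diagonal entries of A₁₁^{(i)} are nonnegative, then the MHE objective F is convex on ℝ^{(N+1)n}. -/

import Mathlib

open Matrix

/-- The `i`-th block of length `n` of a vector in `ℝ^{(N+1)n}`. -/
def blk {n N : ℕ} (ξ : Fin (N + 1) × Fin n → ℝ) (i : Fin (N + 1)) : Fin n → ℝ :=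
  fun a => ξ (i, a)

/-- Quadratic form `vᵀ M v`. -/
def quadForm {ι : Type*} [Fintype ι] (M : Matrix ι ι ℝ) (v : ι → ℝ) : ℝ :=
  v ⬝ᵥ M.mulVec v

/-- Jacobian matrix of `x ↦ f x u` at `x`. -/
noncomputable def jacF {n m : ℕ} (f : (Fin n → ℝ) → (Fin m → ℝ) → (Fin n → ℝ))
    (u : Fin m → ℝ) (x : Fin n → ℝ) : Matrix (Fin n) (Fin n) ℝ :=
  Matrix.of fun i j => fderiv ℝ (fun z => f z u i) x (Pi.single j 1)

/-- Jacobian matrix of `h` at `x`. -/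
noncomputable def jacH {n p : ℕ} (h : (Fin n → ℝ) → (Fin p → ℝ)) (x : Fin n → ℝ) :
    Matrix (Fin p) (Fin n) ℝ :=
  Matrix.of fun i j => fderiv ℝ (fun z => h z i) x (Pi.single j 1)

/-- Hessian matrix of a scalar function `φ` at `x`. -/
noncomputable def hessComp {n : ℕ} (φ : (Fin n → ℝ) → ℝ) (x : Fin n → ℝ) :
    Matrix (Fin n) (Fin n) ℝ :=
  Matrix.of fun a b => fderiv ℝ (fun z => fderiv ℝ φ z (Pi.single b 1)) x (Pi.single a 1)

/-- The MHE objective `F`. -/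
noncomputable def mheF {n m p N : ℕ} (f : (Fin n → ℝ) → (Fin m → ℝ) → (Fin n → ℝ))
    (h : (Fin n → ℝ) → (Fin p → ℝ))
    (Q : Matrix (Fin n) (Fin n) ℝ) (R : Matrix (Fin p) (Fin p) ℝ)
    (P : Matrix (Fin n) (Fin n) ℝ)
    (u : Fin N → Fin m → ℝ) (y : Fin N → Fin p → ℝ) (xhat : Fin n → ℝ)
    (ξ : Fin (N + 1) × Fin n → ℝ) : ℝ :=
  (∑ i : Fin N, quadForm Q⁻¹ (blk ξ i.succ - f (blk ξ i.castSucc) (u i)))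
    + (∑ i : Fin N, quadForm R⁻¹ (y i - h (blk ξ i.castSucc)))
    + quadForm P⁻¹ (blk ξ 0 - xhat)

/-- The block `A₁₁^{(i)}`. -/
noncomputable def mheA11 {n m p N : ℕ} (f : (Fin n → ℝ) → (Fin m → ℝ) → (Fin n → ℝ))
    (h : (Fin n → ℝ) → (Fin p → ℝ))
    (Q : Matrix (Fin n) (Fin n) ℝ) (R : Matrix (Fin p) (Fin p) ℝ)
    (P : Matrix (Fin n) (Fin n) ℝ)
    (u : Fin N → Fin m → ℝ) (y : Fin N → Fin p → ℝ)
    (ξ : Fin (N + 1) × Fin n → ℝ) (i : Fin N) : Matrix (Fin n) (Fin n) ℝ :=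
  (jacF f (u i) (blk ξ i.castSucc))ᵀ * Q⁻¹ * jacF f (u i) (blk ξ i.castSucc)
    + (∑ k : Fin n, ((f (blk ξ i.castSucc) (u i) k - blk ξ i.succ k) * Q⁻¹ k k) •
        hessComp (fun z => f z (u i) k) (blk ξ i.castSucc))
    + (jacH h (blk ξ i.castSucc))ᵀ * R⁻¹ * jacH h (blk ξ i.castSucc)
    + (∑ k : Fin p, ((h (blk ξ i.castSucc) k - y i k) * R⁻¹ k k) •
        hessComp (fun z => h z k) (blk ξ i.castSucc))
    + (if (i : ℕ) = 0 then P⁻¹ else 0)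

/-- The `2n × 2n` block matrix `H̿_i(ξ)`. -/
noncomputable def mheHbb {n m p N : ℕ} (f : (Fin n → ℝ) → (Fin m → ℝ) → (Fin n → ℝ))
    (h : (Fin n → ℝ) → (Fin p → ℝ))
    (Q : Matrix (Fin n) (Fin n) ℝ) (R : Matrix (Fin p) (Fin p) ℝ)
    (P : Matrix (Fin n) (Fin n) ℝ)
    (u : Fin N → Fin m → ℝ) (y : Fin N → Fin p → ℝ)
    (ξ : Fin (N + 1) × Fin n → ℝ) (i : Fin N) :
    Matrix (Fin n ⊕ Fin n) (Fin n ⊕ Fin n) ℝ :=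
  Matrix.fromBlocks (mheA11 f h Q R P u y ξ i)
    (-((jacF f (u i) (blk ξ i.castSucc))ᵀ * Q⁻¹))
    (-(Q⁻¹ * jacF f (u i) (blk ξ i.castSucc)))
    Q⁻¹

/-!
Along a line `t ↦ ξ + t • η`, the `i`-th stage of `F` (its `Q`- and `R`-residuals at `x_i`,
with the prior term charged to stage `0`) has second derivative `2 wᵀ H̿_i w`, where
`w = (η_i, η_{i+1})`. By Gershgorin's theorem a symmetric, diagonally dominant matrix with
nonnegative diagonal is positive semidefinite, so `F` is convex on every line.
-/

open Finset

namespace Matrix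

theorem IsDiag.inv {ι α : Type*} [Fintype ι] [DecidableEq ι] [CommRing α] {D : Matrix ι ι α}
    (hD : D.IsDiag) : D⁻¹.IsDiag := by
  rw [← hD.diagonal_diag, inv_diagonal]
  exact isDiag_diagonal _

theorem posSemidef_of_diagDominant {ι : Type*} [Fintype ι] [DecidableEq ι] {M : Matrix ι ι ℝ}
    (hM : M.IsHermitian) (hdiag : ∀ r, 0 ≤ M r r)
    (hdd : ∀ r, ∑ s ∈ univ.erase r, |M r s| ≤ |M r r|) : M.PosSemidef := by
  rw [hM.posSemidef_iff_eigenvalues_nonneg]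
  refine fun i => show 0 ≤ hM.eigenvalues i from ?_
  have hμ : Module.End.HasEigenvalue (toLin' M) (hM.eigenvalues i) := by
    rw [Module.End.hasEigenvalue_iff_mem_spectrum, spectrum_toLin']
    exact hM.eigenvalues_mem_spectrum_real i
  obtain ⟨k, hk⟩ := eigenvalue_mem_ball hμ
  rw [Metric.mem_closedBall, Real.dist_eq] at hk
  simp only [Real.norm_eq_abs] at hk
  have hk' := hdd k
  rw [abs_of_nonneg (hdiag k)] at hk'
  linarith [neg_abs_le (hM.eigenvalues i - M k k)]

end Matrix

section QuadForm

variable {ι κ : Type*} [Fintype ι] [Fintype κ]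

theorem quadForm_add (M N : Matrix ι ι ℝ) (v : ι → ℝ) :
    quadForm (M + N) v = quadForm M v + quadForm N v := by
  simp only [quadForm, add_mulVec, dotProduct_add]

theorem quadForm_smul (c : ℝ) (M : Matrix ι ι ℝ) (v : ι → ℝ) :
    quadForm (c • M) v = c * quadForm M v := by
  simp only [quadForm, smul_mulVec, dotProduct_smul, smul_eq_mul]

theorem quadForm_sum {α : Type*} (s : Finset α) (M : α → Matrix ι ι ℝ) (v : ι → ℝ) :
    quadForm (∑ a ∈ s, M a) v = ∑ a ∈ s, quadForm (M a) v := by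
  simp only [quadForm, sum_mulVec, dotProduct_sum]

theorem quadForm_neg (M : Matrix ι ι ℝ) (v : ι → ℝ) : quadForm M (-v) = quadForm M v := by
  simp only [quadForm, mulVec_neg, dotProduct_neg, neg_dotProduct, neg_neg]

theorem quadForm_add_smul (M : Matrix ι ι ℝ) (v a : ι → ℝ) (t : ℝ) :
    quadForm M (v + t • a)
      = quadForm M v + (v ⬝ᵥ M *ᵥ a + a ⬝ᵥ M *ᵥ v) * t + quadForm M a * t ^ 2 := by
  simp only [quadForm, mulVec_add, mulVec_smul, dotProduct_add, add_dotProduct, dotProduct_smul,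
    smul_dotProduct, smul_eq_mul]
  ring

theorem quadForm_eq_sum_of_isDiag [DecidableEq ι] {D : Matrix ι ι ℝ} (hD : D.IsDiag)
    (v : ι → ℝ) : quadForm D v = ∑ k, D k k * v k ^ 2 := by
  conv_lhs => rw [← hD.diagonal_diag]
  simp only [quadForm, dotProduct, mulVec_diagonal, Matrix.diag]
  exact sum_congr rfl fun k _ => by ring

theorem quadForm_transpose_mul_mul (J : Matrix κ ι ℝ) (D : Matrix κ κ ℝ) (v : ι → ℝ) :
    quadForm (Jᵀ * D * J) v = quadForm D (J *ᵥ v) := by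
  simp only [quadForm, ← mulVec_mulVec, dotProduct_mulVec _ Jᵀ, vecMul_transpose]

theorem quadForm_fromBlocks (A : Matrix ι ι ℝ) (J : Matrix κ ι ℝ) (D : Matrix κ κ ℝ)
    (a : ι → ℝ) (b : κ → ℝ) :
    quadForm (fromBlocks A (-(Jᵀ * D)) (-(D * J)) D) (Sum.elim a b)
      = quadForm (A - Jᵀ * D * J) a + quadForm D (b - J *ᵥ a) := by
  have hJ : ∀ w, a ⬝ᵥ Jᵀ *ᵥ w = J *ᵥ a ⬝ᵥ w := fun w => by
    rw [dotProduct_mulVec, vecMul_transpose]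
  simp only [quadForm, fromBlocks_mulVec, sumElim_dotProduct_sumElim, Sum.elim_comp_inl,
    Sum.elim_comp_inr, neg_mulVec, sub_mulVec, mulVec_sub, dotProduct_add, dotProduct_neg,
    dotProduct_sub, sub_dotProduct, ← mulVec_mulVec, hJ]
  ring

end QuadForm

def HasSecondDeriv (g g'' : ℝ → ℝ) : Prop :=
  ∃ g' : ℝ → ℝ, (∀ t, HasDerivAt g (g' t) t) ∧ ∀ t, HasDerivAt g' (g'' t) t

namespace HasSecondDeriv

variable {g g₁ g₂ g'' g₁'' g₂'' : ℝ → ℝ}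

theorem congr (h : HasSecondDeriv g g'') (hg : ∀ t, g t = g₁ t) (hg'' : ∀ t, g'' t = g₁'' t) :
    HasSecondDeriv g₁ g₁'' := by
  obtain rfl : g = g₁ := funext hg
  obtain rfl : g'' = g₁'' := funext hg''
  exact h

theorem add (h₁ : HasSecondDeriv g₁ g₁'') (h₂ : HasSecondDeriv g₂ g₂'') :
    HasSecondDeriv (fun t => g₁ t + g₂ t) (fun t => g₁'' t + g₂'' t) := by
  obtain ⟨g₁', hg₁, hg₁'⟩ := h₁
  obtain ⟨g₂', hg₂, hg₂'⟩ := h₂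
  exact ⟨fun t => g₁' t + g₂' t, fun t => (hg₁ t).add (hg₂ t), fun t => (hg₁' t).add (hg₂' t)⟩

theorem const_mul (c : ℝ) (h : HasSecondDeriv g g'') :
    HasSecondDeriv (fun t => c * g t) (fun t => c * g'' t) := by
  obtain ⟨g', hg, hg'⟩ := h
  exact ⟨fun t => c * g' t, fun t => (hg t).const_mul c, fun t => (hg' t).const_mul c⟩

theorem sum {α : Type*} (s : Finset α) {G G'' : α → ℝ → ℝ}
    (h : ∀ a ∈ s, HasSecondDeriv (G a) (G'' a)) :
    HasSecondDeriv (fun t => ∑ a ∈ s, G a t) (fun t => ∑ a ∈ s, G'' a t) := by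
  classical
  induction s using Finset.induction_on with
  | empty =>
    simp only [sum_empty]
    exact ⟨0, fun t => hasDerivAt_const t 0, fun t => hasDerivAt_const t 0⟩
  | insert a s ha ih =>
    simp only [sum_insert ha]
    exact (h a (mem_insert_self a s)).add (ih fun b hb => h b (mem_insert_of_mem hb))

theorem sq {r r' r'' : ℝ → ℝ} (hr : ∀ t, HasDerivAt r (r' t) t)
    (hr' : ∀ t, HasDerivAt r' (r'' t) t) :
    HasSecondDeriv (fun t => r t ^ 2) (fun t => 2 * (r' t ^ 2 + r t * r'' t)) :=
  ⟨fun t => 2 * (r t * r' t), fun t => ((hr t).fun_pow 2).congr_deriv (by norm_num; ring),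
    fun t => (((hr t).mul (hr' t)).const_mul 2).congr_deriv (by ring)⟩

theorem quadratic (α β γ : ℝ) :
    HasSecondDeriv (fun t => α + β * t + γ * t ^ 2) (fun _ => 2 * γ) :=
  ⟨fun t => β + 2 * γ * t,
    fun t => ((((hasDerivAt_id' t).const_mul β).const_add α).add
      (((hasDerivAt_id' t).fun_pow 2).const_mul γ)).congr_deriv (by norm_num; ring),
    fun t => (((hasDerivAt_id' t).const_mul (2 * γ)).const_add β).congr_deriv (by ring)⟩

theorem convexOn_univ (h : HasSecondDeriv g g'') (h0 : ∀ t, 0 ≤ g'' t) :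
    ConvexOn ℝ Set.univ g := by
  obtain ⟨g', hg, hg'⟩ := h
  have hd : deriv g = g' := funext fun t => (hg t).deriv
  refine convexOn_univ_of_deriv2_nonneg (fun t => (hg t).differentiableAt) ?_ fun t => ?_
  · rw [hd]
    exact fun t => (hg' t).differentiableAt
  · rw [Function.iterate_succ_apply, Function.iterate_one, hd, (hg' t).deriv]
    exact h0 t

end HasSecondDeriv

theorem hasSecondDeriv_quadForm_line {ι : Type*} [Fintype ι] (M : Matrix ι ι ℝ) (v a : ι → ℝ) :
    HasSecondDeriv (fun t => quadForm M (v + t • a)) (fun _ => 2 * quadForm M a) :=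
  (HasSecondDeriv.quadratic _ _ _).congr (fun t => (quadForm_add_smul M v a t).symm) fun _ => rfl

theorem convexOn_univ_of_forall_convexOn_line {E : Type*} [AddCommGroup E] [Module ℝ E]
    {F : E → ℝ} (h : ∀ x v : E, ConvexOn ℝ Set.univ fun t : ℝ => F (x + t • v)) :
    ConvexOn ℝ Set.univ F := by
  refine ⟨convex_univ, fun x _ y _ a b ha hb hab => ?_⟩
  have hline := (h x (y - x)).2 (Set.mem_univ 0) (Set.mem_univ 1) ha hb hab
  obtain rfl : a = 1 - b := by linarith
  simp only [smul_eq_mul, mul_zero, mul_one, zero_add, zero_smul, add_zero, one_smul,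
    add_sub_cancel] at hline ⊢
  convert hline using 2
  module

theorem hasDerivAt_comp_line {E F : Type*} [NormedAddCommGroup E] [NormedSpace ℝ E]
    [NormedAddCommGroup F] [NormedSpace ℝ F] {ψ : E → F} {x a : E} {t : ℝ}
    (hψ : DifferentiableAt ℝ ψ (x + t • a)) :
    HasDerivAt (fun s : ℝ => ψ (x + s • a)) (fderiv ℝ ψ (x + t • a) a) t := by
  have hline : HasDerivAt (fun s : ℝ => x + s • a) a t := by
    simpa using ((hasDerivAt_id t).smul_const a).const_add x
  exact hψ.hasFDerivAt.comp_hasDerivAt t hline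

section Derivatives

variable {n p : ℕ}

theorem jacH_mulVec (φ : (Fin n → ℝ) → Fin p → ℝ) (x a : Fin n → ℝ) (k : Fin p) :
    (jacH φ x *ᵥ a) k = fderiv ℝ (fun z => φ z k) x a := by
  conv_rhs => rw [pi_eq_sum_univ' a, map_sum]
  simp only [mulVec, dotProduct, jacH, of_apply, map_smul, smul_eq_mul, mul_comm]

theorem hessComp_apply {φ : (Fin n → ℝ) → ℝ} {x : Fin n → ℝ}
    (hφ : DifferentiableAt ℝ (fderiv ℝ φ) x) (a b : Fin n) :
    hessComp φ x a b = fderiv ℝ (fderiv ℝ φ) x (Pi.single a 1) (Pi.single b 1) := by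
  rw [hessComp, of_apply, fderiv_clm_apply hφ (differentiableAt_const _)]
  simp

theorem hessComp_eq_toMatrix₂' {φ : (Fin n → ℝ) → ℝ} {x : Fin n → ℝ}
    (hφ : DifferentiableAt ℝ (fderiv ℝ φ) x) :
    hessComp φ x = LinearMap.toMatrix₂' ℝ (fderiv ℝ (fderiv ℝ φ) x).toLinearMap₁₂ := by
  ext a b
  rw [hessComp_apply hφ]
  rfl

theorem quadForm_hessComp {φ : (Fin n → ℝ) → ℝ} {x : Fin n → ℝ}
    (hφ : DifferentiableAt ℝ (fderiv ℝ φ) x) (v : Fin n → ℝ) :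
    quadForm (hessComp φ x) v = fderiv ℝ (fderiv ℝ φ) x v v := by
  rw [quadForm, ← Matrix.toLinearMap₂'_apply', hessComp_eq_toMatrix₂' hφ,
    Matrix.toLinearMap₂'_toMatrix']
  rfl

theorem isHermitian_hessComp {φ : (Fin n → ℝ) → ℝ} (hφ : ContDiff ℝ 2 φ) (x : Fin n → ℝ) :
    (hessComp φ x).IsHermitian := by
  have hd : DifferentiableAt ℝ (fderiv ℝ φ) x :=
    (hφ.fderiv_right (m := 1) le_rfl).differentiable one_ne_zero x
  ext a b
  rw [conjTranspose_apply, star_trivial, hessComp_apply hd, hessComp_apply hd]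
  exact hφ.contDiffAt.isSymmSndFDerivAt (by simp) _ _

theorem hasSecondDeriv_quadForm_residual {φ : (Fin n → ℝ) → Fin p → ℝ} (hφ : ContDiff ℝ 2 φ)
    {D : Matrix (Fin p) (Fin p) ℝ} (hD : D.IsDiag) (x a : Fin n → ℝ) (z b : Fin p → ℝ) :
    HasSecondDeriv (fun t => quadForm D (z + t • b - φ (x + t • a)))
      (fun t => 2 * (quadForm D (b - jacH φ (x + t • a) *ᵥ a)
        + quadForm (∑ k, ((φ (x + t • a) k - (z + t • b) k) * D k k) •
            hessComp (fun w => φ w k) (x + t • a)) a)) := by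
  have hφk : ∀ k, ContDiff ℝ 2 fun w => φ w k := contDiff_pi.1 hφ
  have hd : ∀ k y, DifferentiableAt ℝ (fun w => φ w k) y := fun k y =>
    (hφk k).differentiable two_ne_zero y
  have hd' : ∀ k y, DifferentiableAt ℝ (fderiv ℝ fun w => φ w k) y := fun k y =>
    ((hφk k).fderiv_right (m := 1) le_rfl).differentiable one_ne_zero y
  have hr : ∀ k t, HasDerivAt (fun t => z k + t * b k - φ (x + t • a) k)
      (b k - fderiv ℝ (fun w => φ w k) (x + t • a) a) t := fun k t =>
    (((hasDerivAt_id' t).mul_const (b k)).const_add (z k)).sub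
      (hasDerivAt_comp_line (hd k _)) |>.congr_deriv (by ring)
  have hr' : ∀ k t, HasDerivAt (fun t => b k - fderiv ℝ (fun w => φ w k) (x + t • a) a)
      (-fderiv ℝ (fderiv ℝ fun w => φ w k) (x + t • a) a a) t := fun k t =>
    ((hasDerivAt_const t (b k)).sub
      ((hasDerivAt_comp_line (hd' k _)).clm_apply (hasDerivAt_const t a))).congr_deriv (by simp)
  refine (HasSecondDeriv.sum univ fun k _ =>
    (HasSecondDeriv.sq (hr k) (hr' k)).const_mul (D k k)).congr (fun t => ?_) (fun t => ?_)
  · simp [quadForm_eq_sum_of_isDiag hD]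
  · simp only [quadForm_eq_sum_of_isDiag hD, quadForm_sum, quadForm_smul,
      quadForm_hessComp (hd' _ _), mul_sum, ← sum_add_distrib]
    refine sum_congr rfl fun k _ => ?_
    simp only [Pi.sub_apply, Pi.add_apply, Pi.smul_apply, smul_eq_mul, jacH_mulVec]
    ring

end Derivatives

noncomputable def mheStage {n m p N : ℕ} (f : (Fin n → ℝ) → (Fin m → ℝ) → (Fin n → ℝ))
    (h : (Fin n → ℝ) → (Fin p → ℝ))
    (Q : Matrix (Fin n) (Fin n) ℝ) (R : Matrix (Fin p) (Fin p) ℝ)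
    (P : Matrix (Fin n) (Fin n) ℝ)
    (u : Fin N → Fin m → ℝ) (y : Fin N → Fin p → ℝ) (xhat : Fin n → ℝ)
    (ξ : Fin (N + 1) × Fin n → ℝ) (i : Fin N) : ℝ :=
  quadForm Q⁻¹ (blk ξ i.succ - f (blk ξ i.castSucc) (u i))
    + quadForm R⁻¹ (y i - h (blk ξ i.castSucc))
    + quadForm (if (i : ℕ) = 0 then P⁻¹ else 0) (blk ξ i.castSucc - xhat)

section MHE

variable {n m p N : ℕ} {f : (Fin n → ℝ) → (Fin m → ℝ) → (Fin n → ℝ)}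
  {h : (Fin n → ℝ) → (Fin p → ℝ)} {Q : Matrix (Fin n) (Fin n) ℝ} {R : Matrix (Fin p) (Fin p) ℝ}
  {P : Matrix (Fin n) (Fin n) ℝ} {u : Fin N → Fin m → ℝ} {y : Fin N → Fin p → ℝ}
  {xhat : Fin n → ℝ}

theorem mheF_eq_sum_mheStage (hN : 1 ≤ N) (ξ : Fin (N + 1) × Fin n → ℝ) :
    mheF f h Q R P u y xhat ξ = ∑ i, mheStage f h Q R P u y xhat ξ i := by
  have hprior : ∀ i : Fin N,
      quadForm (if (i : ℕ) = 0 then P⁻¹ else 0) (blk ξ i.castSucc - xhat)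
        = if i = ⟨0, hN⟩ then quadForm P⁻¹ (blk ξ 0 - xhat) else 0 := by
    intro i
    split_ifs with h₁ h₂ h₂
    · obtain rfl : i = ⟨0, hN⟩ := Fin.ext h₁
      rfl
    · exact absurd (Fin.ext h₁) h₂
    · exact absurd (congrArg Fin.val h₂) h₁
    · simp [quadForm]
  simp only [mheF, mheStage, sum_add_distrib, hprior, sum_ite_eq', mem_univ, if_true]

theorem blk_add_smul (ξ η : Fin (N + 1) × Fin n → ℝ) (t : ℝ) (i : Fin (N + 1)) :
    blk (ξ + t • η) i = blk ξ i + t • blk η i :=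
  rfl

theorem hasSecondDeriv_mheStage (hf : ∀ v, ContDiff ℝ 2 fun x => f x v) (hh : ContDiff ℝ 2 h)
    (hQ : Q⁻¹.IsDiag) (hR : R⁻¹.IsDiag) (ξ η : Fin (N + 1) × Fin n → ℝ) (i : Fin N) :
    HasSecondDeriv (fun t => mheStage f h Q R P u y xhat (ξ + t • η) i)
      (fun t => 2 * quadForm (mheHbb f h Q R P u y (ξ + t • η) i)
        (Sum.elim (blk η i.castSucc) (blk η i.succ))) := by
  have hQt := hasSecondDeriv_quadForm_residual (hf (u i)) hQ (blk ξ i.castSucc)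
    (blk η i.castSucc) (blk ξ i.succ) (blk η i.succ)
  have hJ : jacH (fun x => f x (u i)) = jacF f (u i) := rfl
  rw [hJ] at hQt
  have hRt := hasSecondDeriv_quadForm_residual hh hR (blk ξ i.castSucc) (blk η i.castSucc) (y i) 0
  have hPt := hasSecondDeriv_quadForm_line (if (i : ℕ) = 0 then P⁻¹ else 0)
    (blk ξ i.castSucc - xhat) (blk η i.castSucc)
  refine ((hQt.add hRt).add hPt).congr (fun t => ?_) (fun t => ?_)
  · simp only [mheStage, blk_add_smul, smul_zero, add_zero, add_sub_right_comm]
  · have hcancel : ∀ A B C D S : Matrix (Fin n) (Fin n) ℝ,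
        A + B + C + D + S - A = B + C + D + S := fun _ _ _ _ _ => by abel
    rw [mheHbb, quadForm_fromBlocks, mheA11, hcancel]
    simp only [smul_zero, add_zero, zero_sub, quadForm_neg, ← quadForm_transpose_mul_mul,
      blk_add_smul, quadForm_add]
    ring

theorem isHermitian_mheHbb (hf : ∀ v, ContDiff ℝ 2 fun x => f x v) (hh : ContDiff ℝ 2 h)
    (hQ : Q⁻¹.IsDiag) (hR : R⁻¹.IsDiag) (hP : P⁻¹.IsHermitian) (ξ : Fin (N + 1) × Fin n → ℝ)
    (i : Fin N) : (mheHbb f h Q R P u y ξ i).IsHermitian := by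
  have hQh : Q⁻¹.IsHermitian := isHermitian_iff_isSymm.2 hQ.isSymm
  have hRh : R⁻¹.IsHermitian := isHermitian_iff_isSymm.2 hR.isSymm
  have hsum : ∀ {q : ℕ} (c : Fin q → ℝ) (φ : Fin q → (Fin n → ℝ) → ℝ),
      (∀ k, ContDiff ℝ 2 (φ k)) → (∑ k, c k • hessComp (φ k) (blk ξ i.castSucc)).IsHermitian :=
    fun c φ hφ => isSelfAdjoint_sum (R := Matrix (Fin n) (Fin n) ℝ) _ fun k _ =>
      (isHermitian_hessComp (hφ k) _).smul (.all _)
  refine .fromBlocks ?_ ?_ hQh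
  · refine ((((isHermitian_conjTranspose_mul_mul _ hQh).add
      (hsum _ _ fun k => contDiff_pi.1 (hf (u i)) k)).add
      (isHermitian_conjTranspose_mul_mul _ hRh)).add (hsum _ _ fun k => contDiff_pi.1 hh k)).add ?_
    split_ifs
    exacts [hP, isHermitian_zero]
  · rw [conjTranspose_neg, conjTranspose_mul, hQh.eq, conjTranspose_eq_transpose_of_trivial,
      transpose_transpose]

end MHE

theorem mhe_convex_of_diag_dominant_general
    (n m p N : ℕ) (hN : 1 ≤ N)
    (f : (Fin n → ℝ) → (Fin m → ℝ) → (Fin n → ℝ))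
    (hf : ContDiff ℝ 2 (fun q : (Fin n → ℝ) × (Fin m → ℝ) => f q.1 q.2))
    (h : (Fin n → ℝ) → (Fin p → ℝ)) (hh : ContDiff ℝ 2 h)
    (Q : Matrix (Fin n) (Fin n) ℝ) (hQdiag : Q.IsDiag) (hQpd : Q.PosDef)
    (R : Matrix (Fin p) (Fin p) ℝ) (hRdiag : R.IsDiag)
    (P : Matrix (Fin n) (Fin n) ℝ) (hP : P.PosDef)
    (u : Fin N → Fin m → ℝ) (y : Fin N → Fin p → ℝ) (xhat : Fin n → ℝ)
    (hdd : ∀ (ξ : Fin (N + 1) × Fin n → ℝ) (i : Fin N) (r : Fin n ⊕ Fin n),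
      ∑ s ∈ Finset.univ.erase r, |mheHbb f h Q R P u y ξ i r s|
        ≤ |mheHbb f h Q R P u y ξ i r r|)
    (hdiag : ∀ (ξ : Fin (N + 1) × Fin n → ℝ) (i : Fin N) (a : Fin n),
      0 ≤ mheA11 f h Q R P u y ξ i a a) :
    ConvexOn ℝ Set.univ (mheF f h Q R P u y xhat) := by
  have hfu : ∀ v, ContDiff ℝ 2 fun x => f x v := fun v =>
    hf.comp (contDiff_id.prodMk contDiff_const)
  have hH : ∀ ξ i, (mheHbb f h Q R P u y ξ i).PosSemidef := by
    refine fun ξ i => posSemidef_of_diagDominant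
      (isHermitian_mheHbb hfu hh hQdiag.inv hRdiag.inv hP.inv.isHermitian ξ i)
      (fun r => ?_) (hdd ξ i)
    rcases r with a | k
    · exact hdiag ξ i a
    · exact hQpd.inv.diag_pos.le
  refine convexOn_univ_of_forall_convexOn_line fun ξ η => ?_
  simp only [mheF_eq_sum_mheStage hN]
  refine (HasSecondDeriv.sum univ fun i _ =>
    hasSecondDeriv_mheStage hfu hh hQdiag.inv hRdiag.inv ξ η i).convexOn_univ fun t => ?_
  refine sum_nonneg fun i _ => mul_nonneg zero_le_two ?_
  simpa [quadForm] using
    (hH (ξ + t • η) i).dotProduct_mulVec_nonneg (Sum.elim (blk η i.castSucc) (blk η i.succ))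

theorem mhe_convex_of_diag_dominant
    (n m p N : ℕ) (hn : 1 ≤ n) (hm : 1 ≤ m) (hp : 1 ≤ p) (hN : 1 ≤ N)
    (f : (Fin n → ℝ) → (Fin m → ℝ) → (Fin n → ℝ))
    (hf : ContDiff ℝ 2 (fun q : (Fin n → ℝ) × (Fin m → ℝ) => f q.1 q.2))
    (h : (Fin n → ℝ) → (Fin p → ℝ)) (hh : ContDiff ℝ 2 h)
    (Q : Matrix (Fin n) (Fin n) ℝ) (hQdiag : Q.IsDiag) (hQpd : Q.PosDef)
    (R : Matrix (Fin p) (Fin p) ℝ) (hRdiag : R.IsDiag) (hRpd : R.PosDef)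
    (P : Matrix (Fin n) (Fin n) ℝ) (hP : P.PosDef)
    (u : Fin N → Fin m → ℝ) (y : Fin N → Fin p → ℝ) (xhat : Fin n → ℝ)
    (hdd : ∀ (ξ : Fin (N + 1) × Fin n → ℝ) (i : Fin N) (r : Fin n ⊕ Fin n),
      ∑ s ∈ Finset.univ.erase r, |mheHbb f h Q R P u y ξ i r s|
        ≤ |mheHbb f h Q R P u y ξ i r r|)
    (hdiag : ∀ (ξ : Fin (N + 1) × Fin n → ℝ) (i : Fin N) (a : Fin n),
      0 ≤ mheA11 f h Q R P u y ξ i a a) :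
    ConvexOn ℝ Set.univ (mheF f h Q R P u y xhat) :=
  mhe_convex_of_diag_dominant_general n m p N hN f hf h hh Q hQdiag hQpd R hRdiag P hP u y xhat hdd
    hdiag
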